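/- Let α > 0 and C₀ > 0. There exists a constant C > 0, depending only on α and C₀, with the following property. For every probability space (Ω, P), every integer T ≥ 1, every family of measurable events W₁, …, W_T ⊆ Ω, and every family of measurable functions D₁, …, D_T : Ω → [0,1] such that for each t: (i) W_t ⊆ {ω : D_t(ω) > 0}, and (ii) P{ω : 0 < D_t(ω) ≤ δ} ≤ C₀·δ^α for every δ ∈ (0,1]; one has Σ_{t=1}^T P(W_t) ≤ C · T^{1/(α+1)} · (Σ_{t=1}^T ∫_{W_t} D_t dP)^{α/(α+1)}. -/

import Mathlib

open MeasureTheory Filter Topology Set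

universe u

/-! Write `N = Σ_t P(W_t)`, `R = Σ_t ∫_{W_t} D_t`, `s = 1/(α+1)` and `e = α/(α+1)`. On `W_t` the
gap is positive, so either it is at most `δ` (probability `≤ C₀ δ^α` by the margin condition) or it
exceeds `δ`, which by Markov's inequality has probability `≤ (∫_{W_t} D_t)/δ`. Summing,
`N ≤ C₀ T δ^α + R/δ` for every `δ ∈ (0,1]`; the choice `δ = (R/(C₀T))^s` balances both terms at
`(C₀T)^s R^e`, and when this `δ` exceeds `1` the trivial bound `N ≤ T` already suffices. -/

theorem measureReal_le_measureReal_pos_le_add_setIntegral_div {Ω : Type*} [MeasurableSpace Ω]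
    {μ : Measure Ω} [IsFiniteMeasure μ] {W : Set Ω} {D : Ω → ℝ} (hW : MeasurableSet W)
    (hD : IntegrableOn D W μ) (hsub : W ⊆ {ω | 0 < D ω}) {δ : ℝ} (hδ : 0 < δ) :
    μ.real W ≤ μ.real {ω | 0 < D ω ∧ D ω ≤ δ} + (∫ ω in W, D ω ∂μ) / δ := by
  have hmarkov : δ * μ.real ({ω | δ ≤ D ω} ∩ W) ≤ ∫ ω in W, D ω ∂μ :=
    calc δ * μ.real ({ω | δ ≤ D ω} ∩ W)
        ≤ δ * (μ.restrict W).real {ω | δ ≤ D ω} :=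
          mul_le_mul_of_nonneg_left
            (ENNReal.toReal_mono (measure_ne_top _ _) (Measure.le_restrict_apply _ _)) hδ.le
      _ ≤ ∫ ω in W, D ω ∂μ :=
          mul_meas_ge_le_integral_of_nonneg
            (ae_restrict_of_forall_mem hW fun ω hω => (hsub hω).le) hD δ
  have hcover : W ⊆ {ω | 0 < D ω ∧ D ω ≤ δ} ∪ ({ω | δ ≤ D ω} ∩ W) := fun ω hω =>
    (le_total (D ω) δ).imp (fun h => ⟨hsub hω, h⟩) (fun h => ⟨h, hω⟩)
  calc μ.real W ≤ μ.real ({ω | 0 < D ω ∧ D ω ≤ δ} ∪ ({ω | δ ≤ D ω} ∩ W)) :=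
        measureReal_mono hcover
    _ ≤ μ.real {ω | 0 < D ω ∧ D ω ≤ δ} + μ.real ({ω | δ ≤ D ω} ∩ W) := measureReal_union_le _ _
    _ ≤ μ.real {ω | 0 < D ω ∧ D ω ≤ δ} + (∫ ω in W, D ω ∂μ) / δ := by
      gcongr
      rwa [le_div_iff₀ hδ, mul_comm]

theorem nonpos_of_forall_le_mul_rpow {x A α : ℝ} (hα : 0 < α)
    (h : ∀ δ ∈ Ioc (0 : ℝ) 1, x ≤ A * δ ^ α) : x ≤ 0 := by
  have hcont : Continuous fun δ : ℝ => A * δ ^ α :=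
    continuous_const.mul (Real.continuous_rpow_const hα.le)
  have hlim : Tendsto (fun δ : ℝ => A * δ ^ α) (𝓝[>] 0) (𝓝 0) :=
    (hcont.tendsto' 0 0 (by simp [Real.zero_rpow hα.ne'])).mono_left nhdsWithin_le_nhds
  exact ge_of_tendsto hlim (eventually_of_mem (Ioc_mem_nhdsGT one_pos) h)

theorem le_two_mul_rpow_mul_rpow_of_forall_le {x A R α : ℝ} (hα : 0 < α) (hA : 0 < A)
    (hR : 0 ≤ R) (hRA : R ≤ A) (h : ∀ δ ∈ Ioc (0 : ℝ) 1, x ≤ A * δ ^ α + R / δ) :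
    x ≤ 2 * A ^ (1 / (α + 1)) * R ^ (α / (α + 1)) := by
  set s := 1 / (α + 1)
  set e := α / (α + 1)
  have hse : s + e = 1 := by rw [← add_div, add_comm, div_self (by positivity)]
  have hsα : s * α = e := one_div_mul_eq_div _ _
  rcases hR.eq_or_lt with rfl | hR
  · rw [Real.zero_rpow (by positivity), mul_zero]
    exact nonpos_of_forall_le_mul_rpow hα fun δ hδ => by simpa using h δ hδ
  -- write `R = A q` and take `δ = q ^ s`
  set q := R / A
  have hRq : R = A * q := (mul_div_cancel₀ R hA.ne').symm
  have hq : 0 < q := by positivity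
  have hq1 : q ≤ 1 := div_le_one_of_le₀ hRA hA.le
  have hsplit : ∀ y : ℝ, 0 < y → y = y ^ s * y ^ e := fun y hy => by
    rw [← Real.rpow_add hy, hse, Real.rpow_one]
  have hδ : q ^ s ∈ Ioc (0 : ℝ) 1 := ⟨by positivity, Real.rpow_le_one hq.le hq1 (by positivity)⟩
  have hRδ : R / q ^ s = A * q ^ e := by
    rw [div_eq_iff (by positivity), hRq]
    linear_combination A * hsplit q hq
  calc x ≤ A * (q ^ s) ^ α + R / q ^ s := h _ hδ
    _ = 2 * (A * q ^ e) := by rw [← Real.rpow_mul hq.le, hsα, hRδ]; ring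
    _ = 2 * A ^ s * R ^ e := by
      rw [hRq, Real.mul_rpow hA.le hq.le]
      linear_combination (2 * q ^ e) * hsplit A hA

theorem le_rpow_mul_rpow_of_forall_le {x c T R α : ℝ} (hα : 0 < α) (hc : 0 < c) (hT : 0 < T)
    (hR : 0 ≤ R) (hxT : x ≤ T) (h : ∀ δ ∈ Ioc (0 : ℝ) 1, x ≤ c * T * δ ^ α + R / δ) :
    x ≤ (2 * c ^ (1 / (α + 1)) + (c ^ (α / (α + 1)))⁻¹) * T ^ (1 / (α + 1)) *
      R ^ (α / (α + 1)) := by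
  set s := 1 / (α + 1)
  set e := α / (α + 1)
  have hTR : 0 ≤ T ^ s * R ^ e := by positivity
  have hce : 0 < (c ^ e)⁻¹ := by positivity
  rcases le_total R (c * T) with hRA | hAR
  · calc x ≤ 2 * (c * T) ^ s * R ^ e :=
          le_two_mul_rpow_mul_rpow_of_forall_le hα (by positivity) hR hRA h
      _ = 2 * c ^ s * (T ^ s * R ^ e) := by rw [Real.mul_rpow hc.le hT.le]; ring
      _ ≤ (2 * c ^ s + (c ^ e)⁻¹) * T ^ s * R ^ e := by nlinarith
  · have hse : s + e = 1 := by rw [← add_div, add_comm, div_self (by positivity)]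
    have hTe : T ^ e ≤ (c ^ e)⁻¹ * R ^ e := by
      rw [inv_mul_eq_div, ← Real.div_rpow hR hc.le]
      exact Real.rpow_le_rpow hT.le ((le_div_iff₀' hc).mpr hAR) (by positivity)
    have hc2 : 0 < 2 * c ^ s := by positivity
    calc x ≤ T ^ s * T ^ e := by rwa [← Real.rpow_add hT, hse, Real.rpow_one]
      _ ≤ T ^ s * ((c ^ e)⁻¹ * R ^ e) := by gcongr
      _ ≤ (2 * c ^ s + (c ^ e)⁻¹) * T ^ s * R ^ e := by nlinarith

theorem inferior_sampling_rate_le_regret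
    (α C₀ : ℝ) (hα : 0 < α) (hC₀ : 0 < C₀) :
    ∃ C : ℝ, 0 < C ∧
      ∀ (Ω : Type u) (_ : MeasurableSpace Ω) (P : Measure Ω), IsProbabilityMeasure P →
      ∀ (T : ℕ), 1 ≤ T →
      ∀ (W : Fin T → Set Ω) (D : Fin T → Ω → ℝ),
        (∀ t, MeasurableSet (W t)) →
        (∀ t, Measurable (D t)) →
        (∀ t ω, D t ω ∈ Set.Icc (0 : ℝ) 1) →
        (∀ t, W t ⊆ {ω | 0 < D t ω}) →
        (∀ t, ∀ δ ∈ Set.Ioc (0 : ℝ) 1,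
          P {ω | 0 < D t ω ∧ D t ω ≤ δ} ≤ ENNReal.ofReal (C₀ * δ ^ α)) →
        ∑ t, (P (W t)).toReal ≤
          C * (T : ℝ) ^ ((1 : ℝ) / (α + 1)) *
            (∑ t, ∫ ω in W t, D t ω ∂P) ^ (α / (α + 1)) := by
  refine ⟨2 * C₀ ^ (1 / (α + 1)) + (C₀ ^ (α / (α + 1)))⁻¹, by positivity, ?_⟩
  intro Ω _ P _ T hT W D hW hD hbd hsub hmargin
  have hint : ∀ t, Integrable (D t) P := fun t =>
    .of_bound (hD t).aestronglyMeasurable 1 (ae_of_all _ fun ω => by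
      rw [Real.norm_of_nonneg (hbd t ω).1]; exact (hbd t ω).2)
  have hround : ∀ t, ∀ δ ∈ Ioc (0 : ℝ) 1,
      P.real (W t) ≤ C₀ * δ ^ α + (∫ ω in W t, D t ω ∂P) / δ := fun t δ hδ =>
    (measureReal_le_measureReal_pos_le_add_setIntegral_div (hW t) (hint t).integrableOn
      (hsub t) hδ.1).trans
      (add_le_add_left (ENNReal.toReal_le_of_le_ofReal
        (mul_nonneg hC₀.le (Real.rpow_nonneg hδ.1.le _)) (hmargin t δ hδ)) _)
  refine le_rpow_mul_rpow_of_forall_le hα hC₀ (by exact_mod_cast hT)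
    (Finset.sum_nonneg fun t _ => setIntegral_nonneg (hW t) fun ω _ => (hbd t ω).1)
    ((Finset.sum_le_sum fun t _ => measureReal_le_one).trans (by simp)) fun δ hδ => ?_
  calc ∑ t, P.real (W t) ≤ ∑ t, (C₀ * δ ^ α + (∫ ω in W t, D t ω ∂P) / δ) :=
        Finset.sum_le_sum fun t _ => hround t δ hδ
    _ = C₀ * T * δ ^ α + (∑ t, ∫ ω in W t, D t ω ∂P) / δ := by
      rw [Finset.sum_add_distrib, Finset.sum_div, Finset.sum_const, Finset.card_univ,
        Fintype.card_fin, nsmul_eq_mul]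
      ring
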